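/- arXiv:1202.2640 — 3 statements merged into one kernel-verified Lean document; each statement's English description precedes it below -/
import Mathlib

section
/- For every real p ≥ 1 and all real numbers a, b, we have |a+b|^p ≤ |a|^p + |b|^p + ∑_{k=1}^{⌊p⌋} C(p,k) (|a|^k |b|^{p-k} + |b|^k |a|^{p-k}), where C(p,k) = p(p-1)⋯(p-k+1)/k! is the generalized binomial coefficient and ⌊p⌋ is the integer part of p. -/
/-!
Write `B_p(x, y) = ∑_{k=0}^{⌊p⌋} C(p,k) (x^k y^{p-k} + y^k x^{p-k})` for `x, y ≥ 0`; the claim is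
`(x + y)^p ≤ B_p(x, y)` applied to `x = |a|`, `y = |b|`. This goes by induction on `⌊p⌋`.
For `p < 1` it is the subadditivity `(x + y)^p ≤ x^p + y^p`. Otherwise
`(x + y)^p = (x + y)^{p-1} (x + y) ≤ B_{p-1}(x, y) (x + y)`, and multiplying out and regrouping with
Pascal's rule `C(p,k+1) = C(p-1,k) + C(p-1,k+1)` gives exactly `B_p(x, y)` minus the nonnegative
term `C(p-1,⌊p⌋) (x^⌊p⌋ y^{p-⌊p⌋} + y^⌊p⌋ x^{p-⌊p⌋})`.
-/

open Finset

/-- Generalized binomial coefficient `C(p,k) = p(p-1)⋯(p-k+1)/k!` for real `p`. -/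
noncomputable def genChoose (p : ℝ) (k : ℕ) : ℝ :=
  (∏ i ∈ Finset.range k, (p - i)) / (Nat.factorial k)

theorem genChoose_eq_ringChoose (p : ℝ) (k : ℕ) : genChoose p k = Ring.choose p k := by
  rw [Ring.choose_eq_smul, genChoose, ← descPochhammer_eval_eq_prod_range,
    ← descPochhammer_map (Int.castRingHom ℝ), Polynomial.eval_map,
    ← Polynomial.eval₂_smulOneHom_eq_smeval]
  simp only [div_eq_inv_mul, RingHom.smulOneHom_eq_algebraMap, algebraMap_int_eq, smul_eq_mul]

theorem genChoose_zero (p : ℝ) : genChoose p 0 = 1 := by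
  simp [genChoose]

theorem genChoose_succ_succ (p : ℝ) (k : ℕ) :
    genChoose (p + 1) (k + 1) = genChoose p k + genChoose p (k + 1) := by
  simp only [genChoose_eq_ringChoose, Ring.choose_succ_succ]

theorem genChoose_nonneg {p : ℝ} {k : ℕ} (hk : (k : ℝ) - 1 ≤ p) : 0 ≤ genChoose p k := by
  rw [genChoose, ← descPochhammer_eval_eq_prod_range]
  exact div_nonneg (descPochhammer_nonneg hk) (by positivity)

theorem sum_genChoose_mul_add_succ (q : ℝ) (w : ℕ → ℝ) (n : ℕ) :
    ∑ k ∈ range (n + 1), genChoose q k * (w k + w (k + 1)) + genChoose q (n + 1) * w (n + 1) =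
      ∑ k ∈ range (n + 2), genChoose (q + 1) k * w k := by
  induction n with
  | zero =>
    simp only [zero_add, sum_range_succ, sum_range_zero, genChoose_zero, genChoose_succ_succ]
    ring
  | succ n ih => rw [sum_range_succ, sum_range_succ _ (n + 2), ← ih, genChoose_succ_succ]; ring

noncomputable def binomTerm (p x y : ℝ) (k : ℕ) : ℝ :=
  x ^ k * y ^ (p - k) + y ^ k * x ^ (p - k)

theorem binomTerm_nonneg (p : ℝ) {x y : ℝ} (hx : 0 ≤ x) (hy : 0 ≤ y) (k : ℕ) :
    0 ≤ binomTerm p x y k := by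
  unfold binomTerm; positivity

theorem add_mul_binomTerm_sub_one {p x y : ℝ} (hx : 0 ≤ x) (hy : 0 ≤ y) {k : ℕ} (hk : p ≠ k) :
    (x + y) * binomTerm (p - 1) x y k = binomTerm p x y k + binomTerm p x y (k + 1) := by
  have hr : p - (k + 1 : ℕ) + 1 ≠ 0 := by push_cast; contrapose! hk; linarith
  have hpk : p - k = p - (k + 1 : ℕ) + 1 := by push_cast; ring
  have hpk' : p - 1 - k = p - (k + 1 : ℕ) := by push_cast; ring
  simp only [binomTerm, hpk, hpk', Real.rpow_add_one' hx hr, Real.rpow_add_one' hy hr, pow_succ]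
  ring

theorem add_rpow_le_sum_genChoose_mul_binomTerm {p x y : ℝ} (hp : 0 ≤ p) (hx : 0 ≤ x)
    (hy : 0 ≤ y) :
    (x + y) ^ p ≤ ∑ k ∈ range (⌊p⌋₊ + 1), genChoose p k * binomTerm p x y k := by
  obtain ⟨n, hn⟩ : ∃ n, ⌊p⌋₊ = n := ⟨_, rfl⟩
  induction n generalizing p with
  | zero =>
    have hp1 : p ≤ 1 := (Nat.floor_eq_zero.1 hn).le
    simpa [hn, binomTerm, genChoose_zero, add_comm] using Real.rpow_add_le_add_rpow hx hy hp hp1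
  | succ n ih =>
    rw [hn]
    have hnp : (n + 1 : ℝ) ≤ p := by exact_mod_cast hn ▸ Nat.floor_le hp
    have hfloor : ⌊p - 1⌋₊ = n := by rw [Nat.floor_sub_one, hn]; rfl
    have hkp : ∀ k ∈ range (n + 1), p ≠ k := fun k hk => by
      have : (k : ℝ) ≤ n := by exact_mod_cast Nat.lt_succ_iff.1 (mem_range.1 hk)
      linarith
    calc (x + y) ^ p = (x + y) ^ (p - 1) * (x + y) := by
          rw [← Real.rpow_add_one' (by positivity) (by linarith), sub_add_cancel]
      _ ≤ (∑ k ∈ range (n + 1), genChoose (p - 1) k * binomTerm (p - 1) x y k) * (x + y) := by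
          gcongr
          simpa [hfloor] using ih (by linarith) hfloor
      _ = ∑ k ∈ range (n + 1), genChoose (p - 1) k *
            (binomTerm p x y k + binomTerm p x y (k + 1)) := by
          rw [sum_mul]
          refine sum_congr rfl fun k hk => ?_
          rw [mul_assoc, mul_comm _ (x + y), add_mul_binomTerm_sub_one hx hy (hkp k hk)]
      _ ≤ ∑ k ∈ range (n + 1), genChoose (p - 1) k *
            (binomTerm p x y k + binomTerm p x y (k + 1)) +
            genChoose (p - 1) (n + 1) * binomTerm p x y (n + 1) := by
          refine le_add_of_nonneg_right (mul_nonneg (genChoose_nonneg ?_) ?_)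
          · push_cast; linarith
          · exact binomTerm_nonneg p hx hy _
      _ = ∑ k ∈ range (n + 1 + 1), genChoose p k * binomTerm p x y k := by
          rw [sum_genChoose_mul_add_succ, sub_add_cancel]

theorem sum_range_genChoose_mul_binomTerm (p x y : ℝ) (n : ℕ) :
    ∑ k ∈ range (n + 1), genChoose p k * binomTerm p x y k = x ^ p + y ^ p +
      ∑ k ∈ Icc 1 n, genChoose p k * (x ^ (k : ℝ) * y ^ (p - k) + y ^ (k : ℝ) * x ^ (p - k)) := by
  rw [range_eq_Ico, sum_eq_sum_Ico_succ_bot n.succ_pos, Nat.succ_eq_add_one,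
    Ico_add_one_right_eq_Icc]
  simp only [genChoose_zero, binomTerm, pow_zero, CharP.cast_eq_zero, sub_zero, one_mul, zero_add,
    Real.rpow_natCast, add_left_inj]
  ring

/-- Inequality (26) of Berkes–Hörmann–Schauer: for real `p ≥ 1` and reals `a, b`,
`|a+b|^p ≤ |a|^p + |b|^p + ∑_{k=1}^{⌊p⌋} C(p,k)(|a|^k |b|^{p-k} + |b|^k |a|^{p-k})`. -/
theorem stmt_1 (p : ℝ) (hp : 1 ≤ p) (a b : ℝ) :
    |a + b| ^ p ≤ |a| ^ p + |b| ^ p +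
      ∑ k ∈ Finset.Icc 1 ⌊p⌋₊, genChoose p k *
        (|a| ^ (k : ℝ) * |b| ^ (p - k) + |b| ^ (k : ℝ) * |a| ^ (p - k)) := by
  calc |a + b| ^ p ≤ (|a| + |b|) ^ p :=
        Real.rpow_le_rpow (abs_nonneg _) (abs_add_le a b) (by linarith)
    _ ≤ ∑ k ∈ range (⌊p⌋₊ + 1), genChoose p k * binomTerm p |a| |b| k :=
        add_rpow_le_sum_genChoose_mul_binomTerm (by linarith) (abs_nonneg a) (abs_nonneg b)
    _ = _ := sum_range_genChoose_mul_binomTerm p |a| |b| ⌊p⌋₊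
end

section
/- For every real p ≥ 1 and every x ∈ [0,1], (1+x)^p ≤ ∑_{k=0}^{⌊p⌋+1} C(p,k) x^k, where C(p,k) is the generalized binomial coefficient. -/
/-!
Expand `(1 + x) ^ p` by Taylor's theorem at `0` to order `n = ⌊p⌋ + 1`. The `k`-th derivative
is `p (p - 1) ⋯ (p - k + 1) (1 + t) ^ (p - k)`, so the Taylor polynomial is the truncated binomial
series, and the Lagrange remainder carries the factor `p (p - 1) ⋯ (p - n)`: its first `n` factors
are nonnegative while `p - n < 0`, so the remainder is nonpositive.
-/

open Finset

open Set Polynomial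

lemma genChoose_eq_descPochhammer_eval_div (p : ℝ) (k : ℕ) :
    genChoose p k = (descPochhammer ℝ k).eval p / k.factorial := by
  rw [genChoose, descPochhammer_eval_eq_prod_range]

lemma descPochhammer_eval_floor_add_two_nonpos {p : ℝ} (hp : 0 ≤ p) :
    (descPochhammer ℝ (⌊p⌋₊ + 2)).eval p ≤ 0 := by
  rw [descPochhammer_succ_eval]
  refine mul_nonpos_of_nonneg_of_nonpos (descPochhammer_nonneg ?_) ?_
  · simpa using Nat.floor_le hp
  · simpa using (Nat.lt_floor_add_one p).le

lemma iteratedDeriv_one_add_rpow (p t : ℝ) (k : ℕ) :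
    iteratedDeriv k (fun x : ℝ => (1 + x) ^ p) t
      = (descPochhammer ℝ k).eval p * (1 + t) ^ (p - k) := by
  rw [iteratedDeriv_comp_const_add k (fun x : ℝ => x ^ p) 1, iteratedDeriv_eq_iterate]
  exact Real.iter_deriv_rpow_const p (1 + t) k

lemma iteratedDeriv_one_add_rpow_floor_add_two_nonpos {p t : ℝ} (hp : 0 ≤ p) (ht : -1 ≤ t) :
    iteratedDeriv (⌊p⌋₊ + 2) (fun x : ℝ => (1 + x) ^ p) t ≤ 0 := by
  rw [iteratedDeriv_one_add_rpow]
  exact mul_nonpos_of_nonpos_of_nonneg (descPochhammer_eval_floor_add_two_nonpos hp)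
    (Real.rpow_nonneg (by linarith) _)

lemma contDiffAt_one_add_rpow (p : ℝ) {t : ℝ} (ht : -1 < t) {n : WithTop ℕ∞} :
    ContDiffAt ℝ n (fun x : ℝ => (1 + x) ^ p) t :=
  (contDiffAt_const.add contDiffAt_id).rpow_const_of_ne (by simp only [id]; linarith)

lemma taylorWithinEval_one_add_rpow (p : ℝ) {x : ℝ} (hx : x ≠ 0) (n : ℕ) :
    taylorWithinEval (fun t : ℝ => (1 + t) ^ p) n (uIcc 0 x) 0 x
      = ∑ k ∈ range (n + 1), genChoose p k * x ^ k := by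
  rw [taylor_within_apply]
  refine sum_congr rfl fun k _ => ?_
  rw [iteratedDerivWithin_eq_iteratedDeriv (uniqueDiffOn_uIcc hx.symm)
      (contDiffAt_one_add_rpow p neg_one_lt_zero) Set.left_mem_uIcc,
    iteratedDeriv_one_add_rpow, genChoose_eq_descPochhammer_eval_div]
  simp only [add_zero, Real.one_rpow, sub_zero, smul_eq_mul]
  ring

lemma le_taylorWithinEval_of_iteratedDeriv_nonpos {f : ℝ → ℝ} {a b : ℝ} {n : ℕ}
    (hab : a < b) (hf : ContDiffOn ℝ (n + 1) f (Icc a b))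
    (hf' : ∀ t ∈ Ioo a b, iteratedDeriv (n + 1) f t ≤ 0) :
    f b ≤ taylorWithinEval f n (Icc a b) a b := by
  rw [← uIcc_of_le hab.le] at hf ⊢
  obtain ⟨ξ, hξ, hrem⟩ := taylor_mean_remainder_lagrange_iteratedDeriv hab.ne hf
  rw [uIoo_of_le hab.le] at hξ
  have hremainder : iteratedDeriv (n + 1) f ξ * (b - a) ^ (n + 1) / (n + 1).factorial ≤ 0 :=
    div_nonpos_of_nonpos_of_nonneg
      (mul_nonpos_of_nonpos_of_nonneg (hf' ξ hξ) (pow_nonneg (sub_nonneg.2 hab.le) _))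
      (Nat.cast_nonneg _)
  linarith

/-- For real `p ≥ 1` and `x ∈ [0,1]`, `(1+x)^p ≤ ∑_{k=0}^{⌊p⌋+1} C(p,k) x^k`. -/
theorem stmt_2 (p : ℝ) (hp : 1 ≤ p) (x : ℝ) (hx : x ∈ Set.Icc (0 : ℝ) 1) :
    (1 + x) ^ p ≤ ∑ k ∈ Finset.range (⌊p⌋₊ + 2), genChoose p k * x ^ k := by
  rcases hx.1.eq_or_lt with rfl | hx0
  · norm_num [genChoose, sum_range_succ']
  have hp0 : 0 ≤ p := by linarith
  calc (1 + x) ^ p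
      ≤ taylorWithinEval (fun t : ℝ => (1 + t) ^ p) (⌊p⌋₊ + 1) (Icc 0 x) 0 x :=
        le_taylorWithinEval_of_iteratedDeriv_nonpos (f := fun t => (1 + t) ^ p) hx0
          (fun t ht => (contDiffAt_one_add_rpow p (by linarith [ht.1])).contDiffWithinAt)
          fun t ht => iteratedDeriv_one_add_rpow_floor_add_two_nonpos hp0 (by linarith [ht.1])
    _ = ∑ k ∈ range (⌊p⌋₊ + 2), genChoose p k * x ^ k := by
        rw [← uIcc_of_le hx0.le, taylorWithinEval_one_add_rpow p hx0.ne']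
end

section
/- Let {Y_k : k ∈ ℤ} be a centered stationary sequence of real random variables that is weakly M-dependent in L² with rate function δ, i.e., for each k and m there exists a random variable Y_k^{(m)} with ‖Y_k − Y_k^{(m)}‖₂ ≤ δ(m), and for disjoint intervals of integers at mutual distance exceeding the corresponding m-parameters the associated approximating vectors are independent. Then for every k ∈ ℤ and j ≥ 1, |E[Y_k Y_{k+j}]| ≤ (2‖Y_1‖₂ + D₂) δ(j−1), where D₂ = ∑_{m=0}^∞ δ(m) (assumed finite). -/
/-!
Write `m = j - 1`, `X' = Y_k^{(m)}` and `Y' = Y_{k+j}^{(m)}`, and split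
`Y_k Y_{k+j} = (Y_k - X') Y_{k+j} + X' (Y_{k+j} - Y') + X' Y'`.
The indices are at distance `j > m`, so `X'` and `Y'` are independent and the last term has
mean zero. Cauchy–Schwarz bounds the first two terms by `δ(m) ‖Y_1‖₂` and `‖X'‖₂ δ(m)`, where
`‖X'‖₂ ≤ ‖Y_1‖₂ + δ(m)`, and `δ(m) ≤ D₂` because `δ ≥ 0`.
-/

open MeasureTheory ProbabilityTheory

section

variable {Ω : Type*} {mΩ : MeasurableSpace Ω} {μ : Measure Ω}

theorem abs_integral_mul_le_eLpNorm_mul_eLpNorm {f g : Ω → ℝ}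
    (hf : MemLp f 2 μ) (hg : MemLp g 2 μ) :
    |∫ ω, f ω * g ω ∂μ| ≤ (eLpNorm f 2 μ).toReal * (eLpNorm g 2 μ).toReal := by
  have h := abs_real_inner_le_norm (hf.toLp f) (hg.toLp g)
  rw [L2.inner_def, Lp.norm_toLp, Lp.norm_toLp] at h
  convert h using 2
  refine integral_congr_ae ?_
  filter_upwards [hf.coeFn_toLp, hg.coeFn_toLp] with ω hfω hgω
  simp [hfω, hgω, mul_comm]

theorem toReal_eLpNorm_le_add_toReal_eLpNorm_sub {f g : Ω → ℝ}
    (hf : MemLp f 2 μ) (hg : MemLp g 2 μ) :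
    (eLpNorm g 2 μ).toReal ≤ (eLpNorm f 2 μ).toReal + (eLpNorm (f - g) 2 μ).toReal := by
  have hfg := hf.sub hg
  rw [← ENNReal.toReal_add hf.eLpNorm_ne_top hfg.eLpNorm_ne_top]
  refine ENNReal.toReal_mono (ENNReal.add_ne_top.2 ⟨hf.eLpNorm_ne_top, hfg.eLpNorm_ne_top⟩) ?_
  calc eLpNorm g 2 μ = eLpNorm (f - (f - g)) 2 μ := by rw [sub_sub_cancel]
    _ ≤ _ := eLpNorm_sub_le hf.1 hfg.1 one_le_two

theorem abs_integral_mul_le_of_indepFun_approx {X Y X' Y' : Ω → ℝ}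
    (hX : MemLp X 2 μ) (hY : MemLp Y 2 μ) (hX' : MemLp X' 2 μ) (hY' : MemLp Y' 2 μ)
    (hind : IndepFun X' Y' μ) (hX'_cent : ∫ ω, X' ω ∂μ = 0) :
    |∫ ω, X ω * Y ω ∂μ| ≤ (eLpNorm (X - X') 2 μ).toReal * (eLpNorm Y 2 μ).toReal
      + (eLpNorm X' 2 μ).toReal * (eLpNorm (Y - Y') 2 μ).toReal := by
  have hXX' := hX.sub hX'
  have hYY' := hY.sub hY'
  have h₁ : Integrable (fun ω => (X - X') ω * Y ω) μ := hXX'.integrable_mul hY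
  have h₂ : Integrable (fun ω => X' ω * (Y - Y') ω) μ := hX'.integrable_mul hYY'
  have h₃ : Integrable (fun ω => X' ω * Y' ω) μ := hX'.integrable_mul hY'
  have h_indep_term : ∫ ω, X' ω * Y' ω ∂μ = 0 := by
    rw [hind.integral_fun_mul_eq_mul_integral hX'.1 hY'.1, hX'_cent, zero_mul]
  have h_split : ∫ ω, X ω * Y ω ∂μ =
      ∫ ω, (X - X') ω * Y ω ∂μ + ∫ ω, X' ω * (Y - Y') ω ∂μ + ∫ ω, X' ω * Y' ω ∂μ := by
    have h₁₂ : Integrable (fun ω => (X - X') ω * Y ω + X' ω * (Y - Y') ω) μ := h₁.add h₂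
    rw [← integral_add h₁ h₂, ← integral_add h₁₂ h₃]
    congr 1 with ω
    simp only [Pi.sub_apply]
    ring
  rw [h_split, h_indep_term, add_zero]
  exact (abs_add_le _ _).trans (add_le_add
    (abs_integral_mul_le_eLpNorm_mul_eLpNorm hXX' hY)
    (abs_integral_mul_le_eLpNorm_mul_eLpNorm hX' hYY'))
end

theorem stmt_4_general {Ω : Type*} [MeasureSpace Ω] [IsProbabilityMeasure (ℙ : Measure Ω)]
    (Y : ℤ → Ω → ℝ) (Yapp : ℤ → ℕ → Ω → ℝ) (δ : ℕ → ℝ) (D₂ : ℝ)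
    (hmem : ∀ k, MemLp (Y k) 2 ℙ)
    (hmemapp : ∀ k m, MemLp (Yapp k m) 2 ℙ)
    (hcentapp : ∀ k m, ∫ ω, Yapp k m ω ∂ℙ = 0)
    (hstat : ∀ k, eLpNorm (Y k) 2 ℙ = eLpNorm (Y 1) 2 ℙ)
    (happrox : ∀ k m, (eLpNorm (fun ω => Y k ω - Yapp k m ω) 2 ℙ).toReal ≤ δ m)
    (hindep : ∀ k l : ℤ, ∀ m m' : ℕ, ((max m m' : ℕ) : ℤ) < |k - l| →
      IndepFun (Yapp k m) (Yapp l m') ℙ)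
    (hD : HasSum δ D₂)
    (k : ℤ) (j : ℕ) (hj : 1 ≤ j) :
    |∫ ω, Y k ω * Y (k + j) ω ∂ℙ| ≤
      (2 * (eLpNorm (Y 1) 2 ℙ).toReal + D₂) * δ (j - 1) := by
  have hδ_nonneg (n : ℕ) : 0 ≤ δ n := ENNReal.toReal_nonneg.trans (happrox k n)
  have hδ_le : δ (j - 1) ≤ D₂ := le_hasSum hD _ fun n _ => hδ_nonneg n
  have hind : IndepFun (Yapp k (j - 1)) (Yapp (k + j) (j - 1)) ℙ :=
    hindep _ _ _ _ (by rw [max_self, sub_add_cancel_left, abs_neg, Nat.abs_cast]; omega)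
  have hcov := abs_integral_mul_le_of_indepFun_approx (hmem k) (hmem (k + j))
    (hmemapp k (j - 1)) (hmemapp (k + j) (j - 1)) hind (hcentapp k (j - 1))
  have hYapp := toReal_eLpNorm_le_add_toReal_eLpNorm_sub (hmem k) (hmemapp k (j - 1))
  have h₁ : (eLpNorm (Y k - Yapp k (j - 1)) 2 ℙ).toReal ≤ δ (j - 1) := happrox k (j - 1)
  have h₂ : (eLpNorm (Y (k + j) - Yapp (k + j) (j - 1)) 2 ℙ).toReal ≤ δ (j - 1) :=
    happrox (k + j) (j - 1)
  rw [hstat] at hcov hYapp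
  have hY₁ : 0 ≤ (eLpNorm (Y 1) 2 ℙ).toReal := ENNReal.toReal_nonneg
  calc |∫ ω, Y k ω * Y (k + j) ω ∂ℙ|
      ≤ δ (j - 1) * (eLpNorm (Y 1) 2 ℙ).toReal
        + ((eLpNorm (Y 1) 2 ℙ).toReal + δ (j - 1)) * δ (j - 1) := by
        refine hcov.trans (add_le_add (by gcongr) ?_)
        exact mul_le_mul (hYapp.trans (by gcongr)) h₂ ENNReal.toReal_nonneg (add_nonneg hY₁ (hδ_nonneg _))
    _ ≤ (2 * (eLpNorm (Y 1) 2 ℙ).toReal + D₂) * δ (j - 1) := by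
        nlinarith [hδ_nonneg (j - 1)]

/-- Covariance bound for weakly M-dependent sequences:
`|E[Y_k Y_{k+j}]| ≤ (2‖Y₁‖₂ + D₂) δ(j-1)` for `j ≥ 1`. -/
theorem stmt_4 {Ω : Type*} [MeasureSpace Ω] [IsProbabilityMeasure (ℙ : Measure Ω)]
    (Y : ℤ → Ω → ℝ) (Yapp : ℤ → ℕ → Ω → ℝ) (δ : ℕ → ℝ) (D₂ : ℝ)
    (hmem : ∀ k, MemLp (Y k) 2 ℙ)
    (hmemapp : ∀ k m, MemLp (Yapp k m) 2 ℙ)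
    (hcent : ∀ k, ∫ ω, Y k ω ∂ℙ = 0)
    (hcentapp : ∀ k m, ∫ ω, Yapp k m ω ∂ℙ = 0)
    (hstat : ∀ k, eLpNorm (Y k) 2 ℙ = eLpNorm (Y 1) 2 ℙ)
    (happrox : ∀ k m, (eLpNorm (fun ω => Y k ω - Yapp k m ω) 2 ℙ).toReal ≤ δ m)
    (hindep : ∀ k l : ℤ, ∀ m m' : ℕ, ((max m m' : ℕ) : ℤ) < |k - l| →
      IndepFun (Yapp k m) (Yapp l m') ℙ)
    (hD : HasSum δ D₂)
    (k : ℤ) (j : ℕ) (hj : 1 ≤ j) :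
    |∫ ω, Y k ω * Y (k + j) ω ∂ℙ| ≤
      (2 * (eLpNorm (Y 1) 2 ℙ).toReal + D₂) * δ (j - 1) :=
  stmt_4_general Y Yapp δ D₂ hmem hmemapp hcentapp hstat happrox hindep hD k j hj
end
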